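/- For all odd n ≥ 1, the integral over [-1,1] of P_{n-1}^{(0,2)}(t)·(1 + P_n^{(0,0)}(t)) dt equals 2·(-1)^{n-1} = 2. More generally, for all n ≥ 1, (1/2)·∫_{-1}^{1} P_{n-1}^{(0,2)}(t)·(P_n^{(0,0)}(t) + 1) dt = (-1)^{n-1}. -/

import Mathlib

open MeasureTheory intervalIntegral Finset

/-- The Jacobi polynomial `P_n^{(a,b)}` with nonnegative integer parameters,
given by the standard finite-sum formula, normalized by
`P_n^{(a,b)}(1) = (a+1)_n / n!`. -/
noncomputable def jacobiP (a b n : ℕ) (x : ℝ) : ℝ :=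
  ∑ s ∈ Finset.range (n + 1),
    (Nat.choose (n + a) (n - s) : ℝ) * (Nat.choose (n + b) s : ℝ) *
      ((x - 1) / 2) ^ s * ((x + 1) / 2) ^ (n - s)

/-!
Split the integrand as `P^{(0,2)}_{n-1} P_n + P^{(0,2)}_{n-1}`. The first part integrates to zero
because `P_n` is orthogonal to polynomials of lower degree, and the second to `2 (-1)^(n-1)`.
Both integrals are computed in the basis `((t - 1) / 2)^s ((t + 1) / 2)^m`, whose integrals
over `[-1, 1]` are Beta integrals. Orthogonality then becomes the vanishing of an `n`-th finite
difference of a polynomial of degree `< n` in the summation index, and `∫ P^{(0,2)}_m` a partial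
alternating sum of binomial coefficients.
-/

open Nat

open Polynomial in
theorem Polynomial.sum_range_neg_one_pow_mul_choose_mul_eval_eq_zero {R : Type*} [CommRing R]
    {n : ℕ} (P : R[X]) (hP : P.natDegree < n) :
    ∑ k ∈ range (n + 1), (-1) ^ k * (n.choose k : R) * P.eval (k : R) = 0 := by
  have h := congrFun (fwdDiff_iter_eq_zero_of_degree_lt hP) 0
  rw [fwdDiff_iter_eq_sum_shift, Pi.zero_apply] at h
  calc _ = (-1) ^ n * ∑ k ∈ range (n + 1),
        ((-1 : ℤ) ^ (n - k) * n.choose k) • P.eval (0 + k • 1) := by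
        rw [mul_sum]
        refine sum_congr rfl fun k hk => ?_
        obtain ⟨j, rfl⟩ := Nat.exists_eq_add_of_le (Nat.lt_succ_iff.mp (mem_range.mp hk))
        have hsign : (-1 : R) ^ (k + j) * (-1) ^ j = (-1) ^ k := by
          rw [pow_add, mul_assoc, ← pow_add, Even.neg_one_pow ⟨j, rfl⟩, mul_one]
        rw [zsmul_eq_mul, nsmul_one, zero_add, Nat.add_sub_cancel_left, ← hsign]
        push_cast
        ring
    _ = 0 := by rw [h, mul_zero]

theorem integral_pow_mul_one_sub_pow (s m : ℕ) :
    ∫ x in (0 : ℝ)..1, x ^ s * (1 - x) ^ m = s ! * m ! / (s + m + 1)! := by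
  have h := Complex.betaIntegral_eq_Gamma_mul_div (s + 1) (m + 1)
    (by norm_cast; positivity) (by norm_cast; positivity)
  rw [show (s + 1 : ℂ) + (m + 1) = ((s + m + 1 : ℕ) : ℂ) + 1 by push_cast; ring,
    Complex.Gamma_nat_eq_factorial, Complex.Gamma_nat_eq_factorial,
    Complex.Gamma_nat_eq_factorial, Complex.betaIntegral] at h
  simp only [add_sub_cancel_right, Complex.cpow_natCast] at h
  have h' := integral_ofReal (a := 0) (b := 1) (μ := volume) (f := fun x => x ^ s * (1 - x) ^ m)
  push_cast at h'
  apply Complex.ofReal_injective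
  rw [← h', h]
  push_cast
  rfl

theorem integral_half_sub_pow_mul_half_add_pow (s m : ℕ) :
    ∫ t in (-1 : ℝ)..1, ((t - 1) / 2) ^ s * ((t + 1) / 2) ^ m
      = 2 * (-1) ^ s * (s ! * m ! / (s + m + 1)! : ℝ) := by
  have h := integral_comp_div_add (a := -1) (b := 1)
    (fun u : ℝ => u ^ m * (1 - u) ^ s) two_ne_zero (1 / 2)
  norm_num at h
  calc _ = (-1) ^ s * ∫ t in (-1 : ℝ)..1, (t / 2 + 1 / 2) ^ m * (1 - (t / 2 + 1 / 2)) ^ s := by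
        rw [← intervalIntegral.integral_const_mul]
        congr 1 with t
        rw [show (t - 1) / 2 = -(1 - (t / 2 + 1 / 2)) by ring, neg_pow]
        ring
    _ = _ := by rw [h, integral_pow_mul_one_sub_pow, add_comm m s]; ring

open Polynomial in
theorem sum_range_neg_one_pow_mul_choose_mul_add_choose_mul_add_choose_eq_zero {a b n : ℕ}
    (h : a + b < n) :
    ∑ k ∈ range (n + 1),
      (-1) ^ k * (n.choose k : ℤ) * ((k + a).choose a * (n - k + b).choose b) = 0 := by
  let P : ℤ[X] := (descPochhammer ℤ a).comp (X + C (a : ℤ)) *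
    (descPochhammer ℤ b).comp (C ((n + b : ℕ) : ℤ) - X)
  have hP : P.natDegree < n := by
    have hlin : (C ((n + b : ℕ) : ℤ) - X).natDegree ≤ 1 :=
      (natDegree_sub_le _ _).trans (by rw [natDegree_C, natDegree_X]; omega)
    refine (natDegree_mul_le.trans
      (_root_.add_le_add natDegree_comp_le natDegree_comp_le)).trans_lt ?_
    rw [descPochhammer_natDegree, descPochhammer_natDegree, natDegree_X_add_C]
    nlinarith
  have hP_eval : ∀ k ∈ range (n + 1),
      P.eval (k : ℤ) = a ! * b ! * ((k + a).choose a * (n - k + b).choose b) := by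
    intro k hk
    have hk : k ≤ n := Nat.lt_succ_iff.mp (mem_range.mp hk)
    simp only [P, eval_mul, eval_comp, eval_add, eval_sub, eval_X, eval_C]
    rw [← Nat.cast_add, show ((n + b : ℕ) : ℤ) - k = ((n - k + b : ℕ) : ℤ) by omega,
      descPochhammer_eval_eq_descFactorial, descPochhammer_eval_eq_descFactorial,
      descFactorial_eq_factorial_mul_choose, descFactorial_eq_factorial_mul_choose]
    push_cast
    ring
  have hfac : (a ! * b ! : ℤ) ≠ 0 := by positivity
  apply mul_left_cancel₀ hfac
  rw [mul_zero, ← P.sum_range_neg_one_pow_mul_choose_mul_eval_eq_zero hP, mul_sum]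
  exact sum_congr rfl fun k hk => by rw [hP_eval k hk]; ring

@[fun_prop]
theorem continuous_jacobiP (a b n : ℕ) : Continuous (jacobiP a b n) := by
  unfold jacobiP
  fun_prop

theorem integral_jacobiP_zero_succ (b m : ℕ) :
    ∫ t in (-1 : ℝ)..1, jacobiP 0 (b + 1) m t = 2 * (-1) ^ m * (m + b).choose m / (m + 1) := by
  have hterm : ∀ s ∈ range (m + 1),
      ∫ t in (-1 : ℝ)..1, ((m + 0).choose (m - s) : ℝ) * (m + (b + 1)).choose s *
        ((t - 1) / 2) ^ s * ((t + 1) / 2) ^ (m - s)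
      = 2 / (m + 1) * ((-1) ^ s * ((m + b + 1).choose s : ℝ)) := by
    intro s hs
    have hs : s ≤ m := Nat.lt_succ_iff.mp (mem_range.mp hs)
    have hm : ((m.choose s * s ! * (m - s)! : ℕ) : ℝ) = m ! := by
      rw [choose_mul_factorial_mul_factorial hs]
    simp_rw [mul_assoc]
    rw [intervalIntegral.integral_const_mul, intervalIntegral.integral_const_mul,
      integral_half_sub_pow_mul_half_add_pow, Nat.add_sub_cancel' hs, add_zero, choose_symm hs,
      factorial_succ]
    push_cast at hm ⊢
    field_simp
    linear_combination ((m + b + 1).choose s : ℝ) * hm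
  unfold jacobiP
  rw [intervalIntegral.integral_finsetSum fun s _ =>
      Continuous.intervalIntegrable (by fun_prop) _ _, sum_congr rfl hterm, ← mul_sum]
  have h := congrArg (Int.cast : ℤ → ℝ)
    (Int.alternating_sum_range_choose_eq_choose (n := m + b) (m := m))
  push_cast at h
  rw [h]
  ring

theorem integral_half_sub_pow_mul_half_add_pow_mul_legendre_eq_zero {a b n : ℕ} (h : a + b < n) :
    ∫ t in (-1 : ℝ)..1, ((t - 1) / 2) ^ a * ((t + 1) / 2) ^ b * jacobiP 0 0 n t = 0 := by
  have hterm : ∀ k ∈ range (n + 1),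
      ∫ t in (-1 : ℝ)..1, ((t - 1) / 2) ^ a * ((t + 1) / 2) ^ b *
        (((n + 0).choose (n - k) : ℝ) * (n + 0).choose k *
          ((t - 1) / 2) ^ k * ((t + 1) / 2) ^ (n - k))
      = 2 * (-1) ^ a * a ! * b ! * n ! / (a + b + n + 1)! *
        ((-1) ^ k * n.choose k * ((k + a).choose a * (n - k + b).choose b)) := by
    intro k hk
    have hk : k ≤ n := Nat.lt_succ_iff.mp (mem_range.mp hk)
    have hn : ((n.choose k * k ! * (n - k)! : ℕ) : ℝ) = n ! := by
      rw [choose_mul_factorial_mul_factorial hk]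
    have ha : (((k + a).choose a * k ! * a ! : ℕ) : ℝ) = (k + a)! := by
      rw [add_choose_mul_factorial_mul_factorial]
    have hb : (((n - k + b).choose b * (n - k)! * b ! : ℕ) : ℝ) = (n - k + b)! := by
      rw [add_choose_mul_factorial_mul_factorial]
    calc _ = ((n.choose k : ℝ) * n.choose k) *
          ∫ t in (-1 : ℝ)..1, ((t - 1) / 2) ^ (k + a) * ((t + 1) / 2) ^ (n - k + b) := by
          rw [← intervalIntegral.integral_const_mul, add_zero, choose_symm hk]
          congr 1 with t
          ring
      _ = _ := by
          rw [integral_half_sub_pow_mul_half_add_pow, ← ha, ← hb,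
            show k + a + (n - k + b) + 1 = a + b + n + 1 by omega, ← hn]
          push_cast
          ring
  simp only [jacobiP.eq_1 0 0 n, mul_sum]
  rw [intervalIntegral.integral_finsetSum fun k _ =>
      Continuous.intervalIntegrable (by fun_prop) _ _, sum_congr rfl hterm, ← mul_sum]
  have hsum := congrArg (Int.cast : ℤ → ℝ)
    (sum_range_neg_one_pow_mul_choose_mul_add_choose_mul_add_choose_eq_zero h)
  push_cast at hsum
  rw [hsum, mul_zero]

theorem integral_jacobiP_mul_legendre_eq_zero (a b : ℕ) {m n : ℕ} (h : m < n) :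
    ∫ t in (-1 : ℝ)..1, jacobiP a b m t * jacobiP 0 0 n t = 0 := by
  simp only [jacobiP.eq_1 a b m, sum_mul]
  rw [intervalIntegral.integral_finsetSum fun s _ =>
    Continuous.intervalIntegrable (by fun_prop) _ _]
  refine sum_eq_zero fun s hs => ?_
  have hs : s + (m - s) < n := by have := mem_range.mp hs; omega
  calc _ = ((m + a).choose (m - s) * (m + b).choose s : ℝ) *
        ∫ t in (-1 : ℝ)..1, ((t - 1) / 2) ^ s * ((t + 1) / 2) ^ (m - s) * jacobiP 0 0 n t := by
        rw [← intervalIntegral.integral_const_mul]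
        congr 1 with t
        ring
    _ = 0 := by rw [integral_half_sub_pow_mul_half_add_pow_mul_legendre_eq_zero hs, mul_zero]

theorem integral_jacobiP_zero_two (m : ℕ) :
    ∫ t in (-1 : ℝ)..1, jacobiP 0 2 m t = 2 * (-1) ^ m := by
  have h := integral_jacobiP_zero_succ 1 m
  rw [choose_succ_self_right] at h
  rw [h]
  push_cast
  field_simp

theorem integral_jacobiP_mul_one_add_legendre :
    (∀ n : ℕ, 1 ≤ n → Odd n →
      ∫ t in (-1 : ℝ)..1, jacobiP 0 2 (n - 1) t * (1 + jacobiP 0 0 n t) = 2) ∧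
    (∀ n : ℕ, 1 ≤ n →
      (1 / 2 : ℝ) * ∫ t in (-1 : ℝ)..1, jacobiP 0 2 (n - 1) t * (jacobiP 0 0 n t + 1)
        = (-1 : ℝ) ^ (n - 1)) := by
  have key : ∀ n : ℕ, 1 ≤ n →
      ∫ t in (-1 : ℝ)..1, jacobiP 0 2 (n - 1) t * (jacobiP 0 0 n t + 1)
        = 2 * (-1) ^ (n - 1) := by
    intro n hn
    simp only [mul_add, mul_one]
    rw [intervalIntegral.integral_add (Continuous.intervalIntegrable (by fun_prop) _ _)
        (Continuous.intervalIntegrable (by fun_prop) _ _),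
      integral_jacobiP_mul_legendre_eq_zero 0 2 (Nat.sub_lt hn one_pos),
      integral_jacobiP_zero_two, zero_add]
  refine ⟨fun n hn hodd => ?_, fun n hn => ?_⟩
  · simp only [add_comm (1 : ℝ), key n hn, (Nat.Odd.sub_odd hodd odd_one).neg_one_pow, mul_one]
  · rw [key n hn]
    ring
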